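/- The number of lattice points needed: in an ideal almost Pogorelov polytope, the minimal number of faces is 14, attained by the 3-dimensional permutohedron; in particular m ≥ 14 and m is even for every ideal almost Pogorelov polytope. -/

import Mathlib

/-- A combinatorial model of a simple 3-dimensional convex polytope:
finite sets of vertices, edges and faces (facets) with incidence relations,
every vertex lying on exactly 3 edges and 3 faces, every edge on exactly
2 vertices and 2 faces, every face having at least 3 edges, together with
the Euler relation `f₀ - f₁ + f₂ = 2` and the standard local properties of
the face poset of a simple 3-polytope. -/
structure SimplePolytope3 where
  V : Type
  E : Type
  F : Type
  fintV : Fintype V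
  fintE : Fintype E
  fintF : Fintype F
  decV : DecidableEq V
  decE : DecidableEq E
  decF : DecidableEq F
  vIncE : V → E → Prop
  eIncF : E → F → Prop
  vIncF : V → F → Prop
  vIncF_iff : ∀ v f, vIncF v f ↔ ∃ e, vIncE v e ∧ eIncF e f
  euler : (Nat.card V : ℤ) - Nat.card E + Nat.card F = 2
  vertex_faces : ∀ v : V, Set.ncard {f | vIncF v f} = 3
  vertex_edges : ∀ v : V, Set.ncard {e | vIncE v e} = 3
  edge_faces : ∀ e : E, Set.ncard {f | eIncF e f} = 2
  edge_vertices : ∀ e : E, Set.ncard {v | vIncE v e} = 2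
  face_deg_ge : ∀ f : F, 3 ≤ Set.ncard {e | eIncF e f}
  faces_card_ge : 4 ≤ Nat.card F
  faces_meet_one_edge : ∀ f g : F, f ≠ g → ∀ e e' : E,
    eIncF e f → eIncF e g → eIncF e' f → eIncF e' g → e = e'
  vertex_share_edge : ∀ f g : F, f ≠ g → ∀ v : V, vIncF v f → vIncF v g →
    ∃ e, eIncF e f ∧ eIncF e g

attribute [instance] SimplePolytope3.fintV SimplePolytope3.fintE SimplePolytope3.fintF
  SimplePolytope3.decV SimplePolytope3.decE SimplePolytope3.decF

namespace SimplePolytope3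

variable (P : SimplePolytope3)

/-- Two facets are adjacent if they are distinct and share an edge. -/
def Adj (f g : P.F) : Prop := f ≠ g ∧ ∃ e, P.eIncF e f ∧ P.eIncF e g

/-- Two facets are disjoint if they are distinct and share no point
(equivalently, no vertex, since facets meeting in a relative interior point of
an edge share the whole edge and hence its vertices). -/
def FDisjoint (f g : P.F) : Prop := f ≠ g ∧ ∀ v, ¬ (P.vIncF v f ∧ P.vIncF v g)

/-- The number of edges of a facet. -/
noncomputable def faceDeg (f : P.F) : ℕ := Set.ncard {e | P.eIncF e f}

/-- A facet is a quadrangle if it has exactly 4 edges. -/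
def IsQuad (f : P.F) : Prop := P.faceDeg f = 4

/-- A `k`-belt: a cyclic sequence of `k` pairwise distinct facets such that
facets are adjacent if and only if they follow each other, and no three
facets of it have a common vertex. -/
def IsBelt {k : ℕ} (b : ZMod k → P.F) : Prop :=
  3 ≤ k ∧ Function.Injective b ∧
  (∀ i j : ZMod k, P.Adj (b i) (b j) ↔ (j = i + 1 ∨ i = j + 1)) ∧
  (∀ v : P.V, ¬ ∃ i j l : ZMod k, i ≠ j ∧ j ≠ l ∧ i ≠ l ∧
    P.vIncF v (b i) ∧ P.vIncF v (b j) ∧ P.vIncF v (b l))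

/-- A belt surrounds a facet `f` if `f` is not in the belt and the facets of
the belt are exactly the facets adjacent to `f`. -/
def Surrounds {k : ℕ} (b : ZMod k → P.F) (f : P.F) : Prop :=
  f ∉ Set.range b ∧ ∀ g, P.Adj g f ↔ g ∈ Set.range b

/-- A simple 3-polytope is flag iff it is not the simplex and has no 3-belt. -/
def Flag : Prop :=
  Nat.card P.F ≠ 4 ∧ ¬ ∃ b : ZMod 3 → P.F, P.IsBelt b

/-- An almost Pogorelov polytope: a flag simple 3-polytope all of whose
4-belts are trivial (each surrounds a facet). -/
def AlmostPogorelov : Prop :=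
  P.Flag ∧ ∀ b : ZMod 4 → P.F, P.IsBelt b → ∃ f, P.Surrounds b f

/-- An ideal almost Pogorelov polytope: an almost Pogorelov polytope each of
whose vertices lies on exactly one quadrangular facet. -/
def IdealAPog : Prop :=
  P.AlmostPogorelov ∧ ∀ v : P.V, ∃! f : P.F, P.vIncF v f ∧ P.IsQuad f

/-- A Pogorelov polytope: not the simplex, with no 3-belts and no 4-belts. -/
def Pogorelov : Prop :=
  P.Flag ∧ ¬ ∃ b : ZMod 4 → P.F, P.IsBelt b

/-- A 3-belt given as a 3-element set of facets: pairwise adjacent facets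
with no common vertex. -/
def Is3Belt (ω : Finset P.F) : Prop :=
  ω.card = 3 ∧ (∀ f ∈ ω, ∀ g ∈ ω, f ≠ g → P.Adj f g) ∧
    ¬ ∃ v : P.V, ∀ f ∈ ω, P.vIncF v f

/-- The graph on a set `ω` of facets where two facets are joined iff they
share a point of `∂P`; its connected components are the connected components
of `P_ω = ⋃_{i ∈ ω} F_i`. -/
def touchGraph (ω : Finset P.F) : SimpleGraph {f : P.F // f ∈ ω} where
  Adj a b := a ≠ b ∧ ∃ v, P.vIncF v a.1 ∧ P.vIncF v b.1
  symm := by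
    constructor
    intro a b hab
    exact ⟨hab.1.symm, hab.2.imp fun v hv => ⟨hv.2, hv.1⟩⟩
  loopless := by constructor; intro a h; exact h.1 rfl

/-- The number of connected components of `P_ω`. -/
noncomputable def comps (ω : Finset P.F) : ℕ := Nat.card (P.touchGraph ω).ConnectedComponent

/-- The Euler characteristic of the 2-complex `P_ω`. -/
noncomputable def chi (ω : Finset P.F) : ℤ :=
  (Set.ncard {v : P.V | ∃ f ∈ ω, P.vIncF v f} : ℤ)
    - (Set.ncard {e : P.E | ∃ f ∈ ω, P.eIncF e f} : ℤ) + (ω.card : ℤ)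

/-- The rank of `H̃¹(P_ω)`, computed as (#components) − χ(P_ω), since each
component of `P_ω` is a sphere with holes. -/
noncomputable def rkH1 (ω : Finset P.F) : ℤ := (P.comps ω : ℤ) - P.chi ω

end SimplePolytope3

/-!
Since every vertex lies on exactly one quadrangle, a polytope with `p₄` quadrangles has
`f₀ = 4 p₄` vertices; then `2 f₁ = 3 f₀` and Euler's formula give `f₁ = 6 p₄` and
`m = 2 (p₄ + 1)`. The vertices of a non-quadrangular facet are paired off by the edges it
shares with quadrangles, so its degree is even, hence at least `6`. Summing degrees,
`12 p₄ = 2 f₁ ≥ 4 p₄ + 6 (m - p₄) = 10 p₄ + 12`, so `p₄ ≥ 6` and `m ≥ 14`.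
The bound is attained by the permutohedron `Pe³`, for which the ideal almost Pogorelov
property is a finite check.
-/

open Finset

theorem ncard_setOf_eq_card_filter {α : Type} [Fintype α] (p : α → Prop) [DecidablePred p] :
    Set.ncard {x | p x} = #{x | p x} := by
  rw [Set.ncard_eq_toFinset_card', Set.toFinset_ofPred]

namespace SimplePolytope3

section Counting

open scoped Classical

variable (P : SimplePolytope3)

theorem card_edges_of_vertex (v : P.V) : #{e | P.vIncE v e} = 3 := by
  rw [← ncard_setOf_eq_card_filter, P.vertex_edges v]

theorem card_faces_of_vertex (v : P.V) : #{f | P.vIncF v f} = 3 := by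
  rw [← ncard_setOf_eq_card_filter, P.vertex_faces v]

theorem card_faces_of_edge (e : P.E) : #{f | P.eIncF e f} = 2 := by
  rw [← ncard_setOf_eq_card_filter, P.edge_faces e]

theorem card_vertices_of_edge (e : P.E) : #{v | P.vIncE v e} = 2 := by
  rw [← ncard_setOf_eq_card_filter, P.edge_vertices e]

theorem faceDeg_eq_card (f : P.F) : P.faceDeg f = #{e | P.eIncF e f} :=
  ncard_setOf_eq_card_filter _

theorem two_mul_card_E : 2 * Fintype.card P.E = 3 * Fintype.card P.V := by
  have := card_mul_eq_card_mul (fun v e => P.vIncE v e) (s := univ) (t := univ)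
    (fun v _ => P.card_edges_of_vertex v) (fun e _ => P.card_vertices_of_edge e)
  simpa [mul_comm] using this.symm

theorem sum_faceDeg : ∑ f, P.faceDeg f = 2 * Fintype.card P.E := by
  have := sum_card_bipartiteAbove_eq_sum_card_bipartiteBelow (fun e f => P.eIncF e f)
    (s := univ) (t := univ)
  simp only [bipartiteAbove, bipartiteBelow, card_faces_of_edge] at this
  simp [faceDeg_eq_card, ← this, mul_comm]

noncomputable def cornerEdges (v : P.V) (f : P.F) : Finset P.E := {e | P.vIncE v e ∧ P.eIncF e f}

variable {P}

theorem sum_card_cornerEdges (v : P.V) : ∑ f ∈ {f | P.vIncF v f}, #(P.cornerEdges v f) = 6 := by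
  have := sum_card_bipartiteAbove_eq_sum_card_bipartiteBelow (fun f e => P.eIncF e f)
    (s := {f | P.vIncF v f}) (t := {e | P.vIncE v e})
  simp only [bipartiteAbove, bipartiteBelow, filter_filter] at this
  rw [show (6 : ℕ) = 3 * 2 from rfl, ← P.card_edges_of_vertex v]
  simp only [cornerEdges, this]
  refine sum_const_nat fun e he => ?_
  rw [← P.card_faces_of_edge e]
  refine congrArg card (filter_congr fun f _ => and_iff_right_of_imp fun hef => ?_)
  exact (P.vIncF_iff v f).2 ⟨e, (mem_filter.1 he).2, hef⟩

theorem card_cornerEdges_union_le (v : P.V) (f g : P.F) :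
    #(P.cornerEdges v f ∪ P.cornerEdges v g) ≤ 3 := by
  rw [← P.card_edges_of_vertex v]
  refine card_le_card fun e he => ?_
  simp only [cornerEdges, mem_union, mem_filter_univ] at he ⊢
  tauto

theorem card_cornerEdges_add_le {v : P.V} {f g : P.F} (hfg : f ≠ g) :
    #(P.cornerEdges v f) + #(P.cornerEdges v g) ≤ 4 := by
  have hinter : #(P.cornerEdges v f ∩ P.cornerEdges v g) ≤ 1 := by
    refine card_le_one.2 fun e he e' he' => ?_
    simp only [cornerEdges, mem_inter, mem_filter_univ] at he he'
    exact P.faces_meet_one_edge f g hfg e e' he.1.2 he.2.2 he'.1.2 he'.2.2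
  have := card_cornerEdges_union_le v f g
  rw [← card_union_add_card_inter]
  omega

/-- The three facets at `v` share six incidences with the edges at `v`, and any two of them
contain at most four of these, so each contains exactly two. -/
theorem card_cornerEdges {v : P.V} {f : P.F} (hvf : P.vIncF v f) : #(P.cornerEdges v f) = 2 := by
  obtain ⟨g₁, g₂, g₃, h₁₂, h₁₃, h₂₃, hfaces⟩ := card_eq_three.1 (P.card_faces_of_vertex v)
  have hsum := sum_card_cornerEdges v
  have hf : f ∈ ({g₁, g₂, g₃} : Finset P.F) := hfaces ▸ mem_filter.2 ⟨mem_univ _, hvf⟩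
  rw [hfaces, sum_insert (by simp [h₁₂, h₁₃]), sum_pair h₂₃] at hsum
  have := card_cornerEdges_add_le (v := v) h₁₂
  have := card_cornerEdges_add_le (v := v) h₁₃
  have := card_cornerEdges_add_le (v := v) h₂₃
  simp only [mem_insert, mem_singleton] at hf
  rcases hf with rfl | rfl | rfl <;> omega

theorem exists_edge_of_vertex_mem_faces {v : P.V} {f g : P.F} (hf : P.vIncF v f)
    (hg : P.vIncF v g) : ∃ e, P.vIncE v e ∧ P.eIncF e f ∧ P.eIncF e g := by
  have := card_union_add_card_inter (P.cornerEdges v f) (P.cornerEdges v g)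
  rw [card_cornerEdges hf, card_cornerEdges hg] at this
  have := card_cornerEdges_union_le v f g
  obtain ⟨e, he⟩ := card_pos.1 (by omega : 0 < #(P.cornerEdges v f ∩ P.cornerEdges v g))
  simp only [cornerEdges, mem_inter, mem_filter_univ] at he
  exact ⟨e, he.1.1, he.1.2, he.2.2⟩

theorem card_vertices_of_edge_of_face {e : P.E} {f : P.F} (hef : P.eIncF e f) :
    #{v | P.vIncF v f ∧ P.vIncE v e} = 2 := by
  rw [← P.card_vertices_of_edge e]
  refine congrArg card (filter_congr fun v _ => and_iff_right_of_imp fun hve => ?_)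
  exact (P.vIncF_iff v f).2 ⟨e, hve, hef⟩

theorem card_vertices_of_face (f : P.F) : #{v | P.vIncF v f} = P.faceDeg f := by
  have := card_mul_eq_card_mul (fun v e => P.vIncE v e) (s := {v | P.vIncF v f})
    (t := {e | P.eIncF e f}) (m := 2) (n := 2) (fun v hv => ?_) (fun e he => ?_)
  · rw [faceDeg_eq_card]
    omega
  · simp only [bipartiteAbove, filter_filter]
    rw [← card_cornerEdges (mem_filter.1 hv).2, cornerEdges]
    simp only [and_comm]
  · simp only [bipartiteBelow, filter_filter]
    exact card_vertices_of_edge_of_face (mem_filter.1 he).2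

theorem card_V_eq_four_mul_card_quads (hQ : ∀ v : P.V, ∃! f : P.F, P.vIncF v f ∧ P.IsQuad f) :
    Fintype.card P.V = 4 * #{f | P.IsQuad f} := by
  have := card_mul_eq_card_mul (fun f v => P.vIncF v f) (s := {f | P.IsQuad f})
    (t := univ) (m := 4) (n := 1) (fun f hf => ?_) (fun v _ => ?_)
  · simpa [mul_comm] using this.symm
  · simpa [bipartiteAbove, card_vertices_of_face, IsQuad] using (mem_filter.1 hf).2
  · simpa [bipartiteBelow, filter_filter, and_comm, Fintype.existsUnique_iff_card_one] using hQ v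

/-- Each vertex of `f` lies on exactly one edge that `f` shares with a quadrangle, namely the
edge towards its own quadrangle. -/
theorem even_faceDeg_of_not_isQuad (hQ : ∀ v : P.V, ∃! f : P.F, P.vIncF v f ∧ P.IsQuad f)
    {f : P.F} (hf : ¬ P.IsQuad f) : Even (P.faceDeg f) := by
  have := card_mul_eq_card_mul (fun v e => P.vIncE v e) (s := {v | P.vIncF v f})
    (t := {e | P.eIncF e f ∧ ∃ q, P.IsQuad q ∧ P.eIncF e q}) (m := 1) (n := 2)
    (fun v hv => ?_) (fun e he => ?_)
  · rw [← card_vertices_of_face, ← mul_one #{v | P.vIncF v f}, this]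
    exact even_two.mul_left _
  · obtain ⟨q, ⟨hvq, hq⟩, hq_unique⟩ := hQ v
    have hvf : P.vIncF v f := (mem_filter.1 hv).2
    have hqf : q ≠ f := by
      rintro rfl
      exact hf hq
    obtain ⟨e₀, hve₀, he₀f, he₀q⟩ := exists_edge_of_vertex_mem_faces hvf hvq
    refine card_eq_one.2 ⟨e₀, eq_singleton_iff_unique_mem.2 ⟨?_, fun e he => ?_⟩⟩
    · simp only [bipartiteAbove, mem_filter, mem_univ, true_and]
      exact ⟨⟨he₀f, q, hq, he₀q⟩, hve₀⟩
    · simp only [bipartiteAbove, mem_filter, mem_univ, true_and] at he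
      obtain ⟨⟨hef, q', hq', heq'⟩, hve⟩ := he
      obtain rfl : q' = q := hq_unique q' ⟨(P.vIncF_iff v q').2 ⟨e, hve, heq'⟩, hq'⟩
      exact P.faces_meet_one_edge q' f hqf e e₀ heq' hef he₀q he₀f
  · simp only [bipartiteBelow, filter_filter]
    exact card_vertices_of_edge_of_face (mem_filter.1 he).2.1

theorem six_le_faceDeg_of_not_isQuad (hQ : ∀ v : P.V, ∃! f : P.F, P.vIncF v f ∧ P.IsQuad f)
    {f : P.F} (hf : ¬ P.IsQuad f) : 6 ≤ P.faceDeg f := by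
  obtain ⟨k, hk⟩ := even_faceDeg_of_not_isQuad hQ hf
  have h3 : 3 ≤ P.faceDeg f := P.face_deg_ge f
  have h4 : P.faceDeg f ≠ 4 := hf
  omega

theorem card_F_eq_two_mul_card_quads_add_one
    (hQ : ∀ v : P.V, ∃! f : P.F, P.vIncF v f ∧ P.IsQuad f) :
    Fintype.card P.F = 2 * (#{f | P.IsQuad f} + 1) := by
  have heuler := P.euler
  simp only [Nat.card_eq_fintype_card] at heuler
  have := P.two_mul_card_E
  have := card_V_eq_four_mul_card_quads hQ
  omega

theorem six_le_card_quads (hQ : ∀ v : P.V, ∃! f : P.F, P.vIncF v f ∧ P.IsQuad f) :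
    6 ≤ #{f | P.IsQuad f} := by
  have hquads : ∑ f ∈ {f | P.IsQuad f}, P.faceDeg f = #{f | P.IsQuad f} * 4 :=
    sum_const_nat fun f hf => (mem_filter.1 hf).2
  have hothers : #{f | ¬ P.IsQuad f} * 6 ≤ ∑ f ∈ {f | ¬ P.IsQuad f}, P.faceDeg f := by
    rw [← smul_eq_mul]
    exact card_nsmul_le_sum _ _ _ fun f hf => six_le_faceDeg_of_not_isQuad hQ (mem_filter.1 hf).2
  have hsplit := sum_filter_add_sum_filter_not univ (fun f => P.IsQuad f) P.faceDeg
  have hcard := card_filter_add_card_filter_not (s := univ) (fun f => P.IsQuad f)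
  rw [sum_faceDeg] at hsplit
  rw [card_univ] at hcard
  have := P.two_mul_card_E
  have := card_V_eq_four_mul_card_quads hQ
  have := card_F_eq_two_mul_card_quads_add_one hQ
  omega

end Counting

end SimplePolytope3

theorem mem_range_zmod_four {α : Type} (b : ZMod 4 → α) (x : α) :
    x ∈ Set.range b ↔ x = b 0 ∨ x = b 1 ∨ x = b 2 ∨ x = b 3 := by
  constructor
  · rintro ⟨i, rfl⟩
    obtain rfl | rfl | rfl | rfl : i = 0 ∨ i = 1 ∨ i = 2 ∨ i = 3 := by revert i; decide
    all_goals simp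
  · rintro (rfl | rfl | rfl | rfl) <;> exact ⟨_, rfl⟩

/-!
Faces of `Pe³` are chains of proper nonempty subsets of `{0, 1, 2, 3}`, incidence being the
reverse inclusion of chains: a facet is one subset `S`, an edge a chain `S ⊂ T`, and a vertex
a maximal chain, i.e. a permutation `σ` read as `σ {0} ⊂ σ {0, 1} ⊂ σ {0, 1, 2}`.
-/

namespace Permutohedron

abbrev Facet := {S : Finset (Fin 4) // 0 < #S ∧ #S < 4}

abbrev Edge := {p : Finset (Fin 4) × Finset (Fin 4) // 0 < #p.1 ∧ p.1 ⊂ p.2 ∧ #p.2 < 4}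

def VertexOn (σ : Equiv.Perm (Fin 4)) (S : Finset (Fin 4)) : Prop := ∀ i, σ i ∈ S ↔ (i : ℕ) < #S

instance : DecidableRel VertexOn := fun _ _ => by unfold VertexOn; infer_instance

end Permutohedron

open Permutohedron in
def permutohedron : SimplePolytope3 where
  V := Equiv.Perm (Fin 4)
  E := Edge
  F := Facet
  fintV := inferInstance
  fintE := inferInstance
  fintF := inferInstance
  decV := inferInstance
  decE := inferInstance
  decF := inferInstance
  vIncE σ e := VertexOn σ e.1.1 ∧ VertexOn σ e.1.2
  eIncF e S := S.1 = e.1.1 ∨ S.1 = e.1.2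
  vIncF σ S := VertexOn σ S.1
  vIncF_iff := by decide +kernel
  euler := by simp only [Nat.card_eq_fintype_card]; decide +kernel
  vertex_faces := by simp only [ncard_setOf_eq_card_filter]; decide +kernel
  vertex_edges := by simp only [ncard_setOf_eq_card_filter]; decide +kernel
  edge_faces := by simp only [ncard_setOf_eq_card_filter]; decide +kernel
  edge_vertices := by simp only [ncard_setOf_eq_card_filter]; decide +kernel
  face_deg_ge := by simp only [ncard_setOf_eq_card_filter]; decide +kernel
  faces_card_ge := by simp only [Nat.card_eq_fintype_card]; decide +kernel
  faces_meet_one_edge := by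
    rintro ⟨f, hf⟩ ⟨g, hg⟩ hfg ⟨⟨A, B⟩, hA, hAB, hB⟩ ⟨⟨A', B'⟩, hA', hAB', hB'⟩ hfe hge hfe' hge'
    have := card_lt_card hAB
    have := card_lt_card hAB'
    simp only [ne_eq, Subtype.mk.injEq, Prod.mk.injEq] at hfg hfe hge hfe' hge' ⊢
    clear hAB hAB'
    grind
  vertex_share_edge := by decide +kernel

namespace Permutohedron

theorem card_F : Nat.card permutohedron.F = 14 := by
  rw [Nat.card_eq_fintype_card]
  decide +kernel

theorem adj_iff (S T : permutohedron.F) :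
    permutohedron.Adj S T ↔ Relation.SymmGen (· ⊂ ·) S.1 T.1 := by
  revert S T
  show ∀ S T : Facet,
    (S ≠ T ∧ ∃ e : Edge, (S.1 = e.1.1 ∨ S.1 = e.1.2) ∧ (T.1 = e.1.1 ∨ T.1 = e.1.2)) ↔ _
  decide +kernel

theorem isQuad_iff (S : permutohedron.F) : permutohedron.IsQuad S ↔ #S.1 = 2 := by
  revert S
  show ∀ S : Facet, Set.ncard {e : Edge | S.1 = e.1.1 ∨ S.1 = e.1.2} = 4 ↔ _
  simp only [ncard_setOf_eq_card_filter]
  decide +kernel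

theorem existsUnique_quad (σ : permutohedron.V) :
    ∃! S : permutohedron.F, permutohedron.vIncF σ S ∧ #S.1 = 2 := by
  revert σ
  show ∀ σ : Equiv.Perm (Fin 4), ∃! S : Facet, VertexOn σ S.1 ∧ #S.1 = 2
  simp only [Fintype.existsUnique_iff_card_one]
  decide +kernel

set_option synthInstance.maxSize 2000 in
theorem exists_vertex_of_chain (S T U : permutohedron.F)
    (hST : Relation.SymmGen (· ⊂ ·) S.1 T.1) (hTU : Relation.SymmGen (· ⊂ ·) T.1 U.1)
    (hSU : Relation.SymmGen (· ⊂ ·) S.1 U.1) :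
    ∃ σ, permutohedron.vIncF σ S ∧ permutohedron.vIncF σ T ∧ permutohedron.vIncF σ U := by
  revert S T U
  show ∀ S T U : Facet, _ → _ → _ →
    ∃ σ : Equiv.Perm (Fin 4), VertexOn σ S.1 ∧ VertexOn σ T.1 ∧ VertexOn σ U.1
  decide +kernel

set_option synthInstance.maxSize 2000 in
/-- Such a square is `{a} ⊂ {a, c, x} ⊃ {c} ⊂ {a, c, y} ⊃ {a}` up to rotation, and `Q = {a, c}`.
The binders are interleaved with the hypotheses so that `decide` prunes early. -/
theorem exists_center_of_square (A B : Facet) (hAB : Relation.SymmGen (· ⊂ ·) A.1 B.1)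
    (C : Facet) (hBC : Relation.SymmGen (· ⊂ ·) B.1 C.1) (hAC_ne : A ≠ C)
    (hAC : ¬Relation.SymmGen (· ⊂ ·) A.1 C.1) (D : Facet)
    (hCD : Relation.SymmGen (· ⊂ ·) C.1 D.1) (hDA : Relation.SymmGen (· ⊂ ·) D.1 A.1)
    (hBD_ne : B ≠ D) (hBD : ¬Relation.SymmGen (· ⊂ ·) B.1 D.1) :
    ∃ Q : Facet, ∀ X : Facet,
      Relation.SymmGen (· ⊂ ·) X.1 Q.1 ↔ X = A ∨ X = B ∨ X = C ∨ X = D := by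
  revert A B C D
  decide +kernel

theorem flag : permutohedron.Flag := by
  refine ⟨by rw [card_F]; decide, ?_⟩
  rintro ⟨b, -, -, hadj, hvert⟩
  have hrel (i j : ZMod 3) (hij : j = i + 1 ∨ i = j + 1) :
      Relation.SymmGen (· ⊂ ·) (b i).1 (b j).1 :=
    (adj_iff _ _).1 ((hadj i j).2 hij)
  obtain ⟨σ, hσ⟩ := exists_vertex_of_chain (b 0) (b 1) (b 2)
    (hrel 0 1 (by decide)) (hrel 1 2 (by decide)) (hrel 0 2 (by decide))
  exact hvert σ ⟨0, 1, 2, by decide, by decide, by decide, hσ⟩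

theorem exists_surrounds (b : ZMod 4 → permutohedron.F) (hb : permutohedron.IsBelt b) :
    ∃ f, permutohedron.Surrounds b f := by
  obtain ⟨-, hinj, hadj, -⟩ := hb
  have hrel (i j : ZMod 4) :
      Relation.SymmGen (· ⊂ ·) (b i).1 (b j).1 ↔ j = i + 1 ∨ i = j + 1 :=
    (adj_iff _ _).symm.trans (hadj i j)
  obtain ⟨Q, hQ⟩ := exists_center_of_square (b 0) (b 1) ((hrel 0 1).2 (by decide))
    (b 2) ((hrel 1 2).2 (by decide)) (hinj.ne (by decide)) (mt (hrel 0 2).1 (by decide))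
    (b 3) ((hrel 2 3).2 (by decide)) ((hrel 3 0).2 (by decide)) (hinj.ne (by decide))
    (mt (hrel 1 3).1 (by decide))
  have hQb (X : permutohedron.F) : permutohedron.Adj X Q ↔ X ∈ Set.range b :=
    (adj_iff X Q).trans ((hQ X).trans (mem_range_zmod_four b X).symm)
  exact ⟨Q, fun hQ' => ((hQb Q).2 hQ').1 rfl, hQb⟩

theorem idealAPog : permutohedron.IdealAPog := by
  refine ⟨⟨flag, exists_surrounds⟩, fun σ => ?_⟩
  simpa only [isQuad_iff] using existsUnique_quad σ

end Permutohedron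

/-- Every ideal almost Pogorelov polytope has an even number
`m ≥ 14` of faces, and the minimum `m = 14` is attained (by the
3-dimensional permutohedron). -/
theorem ideal_almost_pogorelov_face_bound :
    (∀ P : SimplePolytope3, P.IdealAPog →
      14 ≤ Nat.card P.F ∧ Even (Nat.card P.F)) ∧
    (∃ P : SimplePolytope3, P.IdealAPog ∧ Nat.card P.F = 14) := by
  refine ⟨fun P hP => ?_, permutohedron, Permutohedron.idealAPog, Permutohedron.card_F⟩
  have hquads := P.six_le_card_quads hP.2
  rw [Nat.card_eq_fintype_card, P.card_F_eq_two_mul_card_quads_add_one hP.2]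
  exact ⟨by omega, even_two_mul _⟩
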